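/- Let (R, M) be a unital local artinian ring in which every left ideal and every right ideal is principal, let G be a finite group, and suppose that the group ring R[G] is an abelian ring. If |G|·1_R is a unit of R, then G is R-admissible, i.e. |G|·1 is a unit in the division ring R/J(R), and every centrally primitive idempotent of the group ring (R/J(R))[G] can be lifted to a centrally primitive idempotent of the group ring (R/J(R)^2)[G] along the canonical surjection (R/J(R)^2)[G] → (R/J(R))[G]. -/

import Mathlib

universe u

/-- A unital ring is *abelian* if every idempotent element is central. -/
def IsAbelianRing (S : Type*) [Ring S] : Prop :=
  ∀ e : S, IsIdempotentElem e → e ∈ Set.center S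

/-- A *centrally primitive idempotent* of a ring `S` is a nonzero central idempotent `e`
which cannot be written as a sum of two nonzero orthogonal central idempotents. -/
def IsCentrallyPrimitiveIdempotent {S : Type*} [Ring S] (e : S) : Prop :=
  IsIdempotentElem e ∧ e ∈ Set.center S ∧ e ≠ 0 ∧
    ∀ e₁ e₂ : S, IsIdempotentElem e₁ → IsIdempotentElem e₂ →
      e₁ ∈ Set.center S → e₂ ∈ Set.center S → e₁ ≠ 0 → e₂ ≠ 0 →
      e₁ * e₂ = 0 → e₂ * e₁ = 0 → e ≠ e₁ + e₂

/-- The square `J(R)²` of the Jacobson radical of a ring `R`, as a two-sided ideal. -/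
noncomputable def jacobsonSq (R : Type u) [Ring R] : TwoSidedIdeal R :=
  TwoSidedIdeal.span
    {x | ∃ a ∈ (⊥ : TwoSidedIdeal R).jacobson, ∃ b ∈ (⊥ : TwoSidedIdeal R).jacobson, x = a * b}

/-- The ring homomorphism between monoid algebras induced by a ring homomorphism between
the coefficient rings. -/
noncomputable def MonoidAlgebra.mapRangeRingHom' {A B : Type*} [Ring A] [Ring B]
    (G : Type*) [Group G] (f : A →+* B) : MonoidAlgebra A G →+* MonoidAlgebra B G :=
  MonoidAlgebra.liftNCRingHom (MonoidAlgebra.singleOneRingHom.comp f)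
    (MonoidAlgebra.of B G) (fun x y => by
      show Commute (MonoidAlgebra.single 1 (f x)) (MonoidAlgebra.single y 1)
      simp only [Commute, SemiconjBy, MonoidAlgebra.single_mul_single, one_mul, mul_one])

/-! ### Auxiliary lemmas -/

lemma mapRangeRingHom'_single {A B : Type*} [Ring A] [Ring B] {G : Type*} [Group G]
    (f : A →+* B) (g : G) (a : A) :
    MonoidAlgebra.mapRangeRingHom' G f (MonoidAlgebra.single g a)
      = MonoidAlgebra.single g (f a) := by
  simp [MonoidAlgebra.mapRangeRingHom', MonoidAlgebra.liftNCRingHom,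
    MonoidAlgebra.liftNC_single, MonoidAlgebra.singleOneRingHom,
    MonoidAlgebra.of_apply, MonoidAlgebra.single_mul_single]

lemma mapRangeRingHom'_apply {A B : Type*} [Ring A] [Ring B] {G : Type*} [Group G]
    (f : A →+* B) (x : MonoidAlgebra A G) (g : G) :
    (MonoidAlgebra.mapRangeRingHom' G f x).coeff g = f (x.coeff g) := by
  induction x using MonoidAlgebra.induction_linear with
  | zero => simp
  | add a b ha hb => rw [map_add, MonoidAlgebra.coeff_add, Finsupp.add_apply, MonoidAlgebra.coeff_add, Finsupp.add_apply, ha, hb, map_add]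
  | single g' a =>
      rw [mapRangeRingHom'_single]
      classical
      by_cases h : g' = g <;> simp [MonoidAlgebra.coeff_single, Finsupp.single_apply, h]

lemma mapRangeRingHom'_surjective {A B : Type*} [Ring A] [Ring B] {G : Type*} [Group G]
    (f : A →+* B) (hf : Function.Surjective f) :
    Function.Surjective (MonoidAlgebra.mapRangeRingHom' G f) := by
  intro y
  induction y using MonoidAlgebra.induction_linear with
  | zero => exact ⟨0, map_zero _⟩
  | add a b ha hb =>
      obtain ⟨a', rfl⟩ := ha; obtain ⟨b', rfl⟩ := hb
      exact ⟨a' + b', map_add _ _ _⟩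
  | single g b =>
      obtain ⟨a, rfl⟩ := hf b
      exact ⟨MonoidAlgebra.single g a, mapRangeRingHom'_single f g a⟩

lemma twoSided_mk'_eq_zero {R : Type*} [Ring R] (I : TwoSidedIdeal R) (a : R) :
    I.ringCon.mk' a = 0 ↔ a ∈ I := by
  have h0 : (0 : I.ringCon.Quotient) = I.ringCon.mk' 0 := (map_zero _).symm
  rw [h0]
  show (a : I.ringCon.Quotient) = ((0 : R) : I.ringCon.Quotient) ↔ _
  rw [RingCon.eq, I.mem_iff]

lemma single_one_mul_comm {R : Type*} [Ring R] {G : Type*} [Group G] (s : R)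
    (h : ∀ r : R, ∃ r', s * r = r' * s) (w : MonoidAlgebra R G) :
    ∃ w' : MonoidAlgebra R G,
      MonoidAlgebra.single (1 : G) s * w = w' * MonoidAlgebra.single (1 : G) s := by
  classical
  set c : R → R := fun r => if hr : r = 0 then 0 else (h r).choose with hc
  have hcs : ∀ r, s * r = c r * s := by
    intro r
    by_cases hr : r = 0
    · simp [hc, hr]
    · simp only [hc, hr, dif_neg, not_false_iff]
      exact (h r).choose_spec
  refine ⟨MonoidAlgebra.ofCoeff (w.coeff.mapRange c (by simp [hc])), ?_⟩
  ext g
  rw [MonoidAlgebra.single_one_mul_apply, MonoidAlgebra.mul_single_one_apply,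
    MonoidAlgebra.coeff_ofCoeff, Finsupp.mapRange_apply, hcs]

lemma pow_eq_zero_of_coeffs {R : Type*} [Ring R] {G : Type*} [Group G]
    (t : R) (n : ℕ) (ht : t ^ n = 0) (hcomm : ∀ r : R, ∃ r', t * r = r' * t)
    (x : MonoidAlgebra R G) (hx : ∀ g : G, ∃ r, x.coeff g = r * t) : x ^ (n + 1) = 0 := by
  classical
  have hpow : ∀ k : ℕ, ∀ r : R, ∃ r', t ^ k * r = r' * t ^ k := by
    intro k
    induction k with
    | zero => exact fun r => ⟨r, by simp⟩
    | succ k ih =>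
        intro r
        obtain ⟨r', h'⟩ := hcomm r
        obtain ⟨r'', h''⟩ := ih r'
        refine ⟨r'', ?_⟩
        rw [pow_succ, mul_assoc, h', ← mul_assoc, h'', mul_assoc]
  have hbase : ∃ z : MonoidAlgebra R G, x = z * MonoidAlgebra.single (1 : G) t := by
    set u : G → R := fun g => if hg : x.coeff g = 0 then 0 else (hx g).choose with hu
    refine ⟨MonoidAlgebra.ofCoeff (Finsupp.onFinset x.coeff.support u ?_), ?_⟩
    · intro g hg
      rw [Finsupp.mem_support_iff]
      intro h0
      exact hg (by simp [hu, h0])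
    · ext g
      rw [MonoidAlgebra.mul_single_one_apply, MonoidAlgebra.coeff_ofCoeff (Finsupp.onFinset _ _ _), Finsupp.onFinset_apply]
      by_cases hg : x.coeff g = 0
      · simp [hu, hg]
      · simp only [hu, hg, dif_neg, not_false_iff]
        exact (hx g).choose_spec
  have key : ∀ k : ℕ, ∃ z : MonoidAlgebra R G,
      x ^ (k + 1) = z * MonoidAlgebra.single (1 : G) (t ^ (k + 1)) := by
    intro k
    induction k with
    | zero => simpa [pow_one] using hbase
    | succ k ih =>
        obtain ⟨z, hz⟩ := ih
        obtain ⟨z₁, hz₁⟩ := hbase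
        obtain ⟨z₁', hz₁'⟩ := single_one_mul_comm (t ^ (k + 1)) (hpow (k + 1)) z₁
        refine ⟨z * z₁', ?_⟩
        rw [pow_succ, hz, hz₁, mul_assoc, ← mul_assoc (MonoidAlgebra.single (1:G) (t ^ (k+1))),
          hz₁', mul_assoc, MonoidAlgebra.single_mul_single, one_mul, ← pow_succ, ← mul_assoc]
  obtain ⟨z, hz⟩ := key n
  rw [hz, pow_succ, ht, zero_mul, MonoidAlgebra.single_zero, mul_zero]

lemma exists_pow_eq_zero_gen {R : Type u} [Ring R] (hart : IsArtinianRing R)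
    (M : TwoSidedIdeal R) (hmax : (TwoSidedIdeal.asIdeal M).IsMaximal)
    (huniq : ∀ I : Ideal R, I.IsMaximal → I = TwoSidedIdeal.asIdeal M)
    (t : R) (htM : TwoSidedIdeal.asIdeal M = Ideal.span {t}) : ∃ n, t ^ n = 0 := by
  haveI := hart
  have hmono : ∀ k : ℕ, Ideal.span {t ^ (k+1)} ≤ Ideal.span {t ^ k} := by
    intro k
    rw [Ideal.span_le, Set.singleton_subset_iff]
    have : t ^ (k+1) = t • t ^ k := by rw [smul_eq_mul, ← pow_succ']
    rw [this]
    exact Submodule.smul_mem _ t (Ideal.subset_span rfl)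
  let f : ℕ →o (Ideal R)ᵒᵈ :=
    ⟨fun n => OrderDual.toDual (Ideal.span {t ^ n}),
      monotone_nat_of_le_succ fun k => hmono k⟩
  obtain ⟨n, hn⟩ := IsArtinian.monotone_stabilizes f
  have hsp : Ideal.span {t ^ n} = Ideal.span {t ^ (n+1)} := by
    have := hn (n+1) (Nat.le_succ n)
    simpa [f] using this
  have h1 : t ^ n ∈ Ideal.span {t ^ (n+1)} := hsp ▸ Ideal.subset_span rfl
  obtain ⟨r, hr⟩ := Submodule.mem_span_singleton.mp h1
  rw [smul_eq_mul] at hr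
  have hzero : (1 - r * t) * t ^ n = 0 := by
    have : t ^ (n+1) = t * t ^ n := by rw [pow_succ']
    rw [sub_mul, one_mul, mul_assoc, ← this, hr, sub_self]
  have hrt : r * t ∈ TwoSidedIdeal.asIdeal M := by
    have ht : t ∈ TwoSidedIdeal.asIdeal M := htM ▸ Ideal.subset_span rfl
    simpa [smul_eq_mul] using Submodule.smul_mem _ r ht
  have hinv : ∃ v : R, v * (1 - r * t) = 1 := by
    by_cases hne : Ideal.span {1 - r * t} = ⊤
    · have : (1 : R) ∈ Ideal.span {1 - r * t} := hne ▸ Submodule.mem_top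
      obtain ⟨v, hv⟩ := Submodule.mem_span_singleton.mp this
      exact ⟨v, by rwa [smul_eq_mul] at hv⟩
    · exfalso
      obtain ⟨Mx, hMx, hle⟩ := Ideal.exists_le_maximal _ hne
      rw [huniq Mx hMx] at hle
      have h1' : (1 - r * t) ∈ TwoSidedIdeal.asIdeal M := hle (Ideal.subset_span rfl)
      have : (1 : R) ∈ TwoSidedIdeal.asIdeal M := by
        have := add_mem h1' hrt
        simpa using this
      exact hmax.ne_top ((Ideal.eq_top_iff_one _).mpr this)
  obtain ⟨v, hv⟩ := hinv
  refine ⟨n, ?_⟩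
  calc t ^ n = (v * (1 - r * t)) * t ^ n := by rw [hv, one_mul]
    _ = v * ((1 - r * t) * t ^ n) := by rw [mul_assoc]
    _ = 0 := by rw [hzero, mul_zero]

/-- Let `(R, M)` be a unital local artinian ring in which every left ideal and every right
ideal is principal, let `G` be a finite group, and suppose that the group ring `R[G]` is
abelian.  If `|G|·1_R` is a unit of `R`, then `G` is `R`-admissible: `|G|·1` is a unit of
the division ring `R/J(R)`, and every centrally primitive idempotent of `(R/J(R))[G]`
lifts to a centrally primitive idempotent of `(R/J(R)²)[G]` along the canonical surjection
`(R/J(R)²)[G] → (R/J(R))[G]` (i.e. along the map induced by the unique ring homomorphism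
`R/J(R)² → R/J(R)` commuting with the quotient maps from `R`). -/
theorem admissible_of_isUnit_card
    (R : Type u) [Ring R] (M : TwoSidedIdeal R)
    (hmax : (TwoSidedIdeal.asIdeal M).IsMaximal)
    (huniq : ∀ I : Ideal R, I.IsMaximal → I = TwoSidedIdeal.asIdeal M)
    (hart : IsArtinianRing R) (hartOp : IsArtinianRing Rᵐᵒᵖ)
    (hpir : ∀ I : Ideal R, I.IsPrincipal) (hpirOp : ∀ I : Ideal Rᵐᵒᵖ, I.IsPrincipal)
    (G : Type u) [Group G] [Finite G]
    (habelian : IsAbelianRing (MonoidAlgebra R G))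
    (hG : IsUnit ((Nat.card G : R))) :
    IsUnit ((Nat.card G : ((⊥ : TwoSidedIdeal R).jacobson).ringCon.Quotient)) ∧
    ∀ π : (jacobsonSq R).ringCon.Quotient →+* ((⊥ : TwoSidedIdeal R).jacobson).ringCon.Quotient,
      π.comp (jacobsonSq R).ringCon.mk' = ((⊥ : TwoSidedIdeal R).jacobson).ringCon.mk' →
      ∀ u : MonoidAlgebra (((⊥ : TwoSidedIdeal R).jacobson).ringCon.Quotient) G,
        IsCentrallyPrimitiveIdempotent u →
        ∃ v : MonoidAlgebra ((jacobsonSq R).ringCon.Quotient) G,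
          IsCentrallyPrimitiveIdempotent v ∧ MonoidAlgebra.mapRangeRingHom' G π v = u := by
  classical
  set J := (⊥ : TwoSidedIdeal R).jacobson with hJdef
  set K := jacobsonSq R with hKdef
  constructor
  · have h := hG.map J.ringCon.mk'
    rwa [map_natCast] at h
  intro π hπ u hu
  -- `J ≤ M`
  have hJM : ∀ x : R, x ∈ J → x ∈ M := by
    intro x hx
    have hx' : x ∈ TwoSidedIdeal.asIdeal J := TwoSidedIdeal.mem_asIdeal.mpr hx
    rw [hJdef, TwoSidedIdeal.asIdeal_jacobson] at hx'
    have hle : (TwoSidedIdeal.asIdeal (⊥ : TwoSidedIdeal R)).jacobson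
        ≤ TwoSidedIdeal.asIdeal M := by
      apply sInf_le
      refine ⟨?_, hmax⟩
      intro y hy
      rw [TwoSidedIdeal.mem_asIdeal, TwoSidedIdeal.mem_bot] at hy
      rw [hy]
      exact zero_mem _
    exact TwoSidedIdeal.mem_asIdeal.mp (hle hx')
  have hKJ : ∀ x : R, x ∈ K → x ∈ J := by
    intro x hx
    rw [hKdef, jacobsonSq] at hx
    refine TwoSidedIdeal.mem_span_iff.mp hx J ?_
    rintro z ⟨a, ha, b, hb, rfl⟩
    exact J.mul_mem_right a b ha
  -- generator of `M`
  obtain ⟨t, htM⟩ := (hpir (TwoSidedIdeal.asIdeal M)).principal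
  have hMt : ∀ x : R, x ∈ M → ∃ r, x = r * t := by
    intro x hx
    have hx' : x ∈ TwoSidedIdeal.asIdeal M := TwoSidedIdeal.mem_asIdeal.mpr hx
    rw [htM] at hx'
    obtain ⟨r, hr⟩ := Submodule.mem_span_singleton.mp hx'
    exact ⟨r, by rw [← hr, smul_eq_mul]⟩
  have ht : t ∈ M := by
    rw [← TwoSidedIdeal.mem_asIdeal, htM]
    exact Submodule.mem_span_singleton_self t
  have hcomm : ∀ r : R, ∃ r', t * r = r' * t := fun r => hMt _ (M.mul_mem_right t r ht)
  obtain ⟨n, htn⟩ := exists_pow_eq_zero_gen hart M hmax huniq t htM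
  -- quotient maps
  have hmk2surj : Function.Surjective K.ringCon.mk' := fun q =>
    Quot.inductionOn q fun a => ⟨a, rfl⟩
  have hmk1surj : Function.Surjective J.ringCon.mk' := fun q =>
    Quot.inductionOn q fun a => ⟨a, rfl⟩
  have hπmk : ∀ a : R, π (K.ringCon.mk' a) = J.ringCon.mk' a := fun a =>
    RingHom.congr_fun hπ a
  have hπsurj : Function.Surjective π := by
    intro b
    obtain ⟨a, rfl⟩ := hmk1surj b
    exact ⟨K.ringCon.mk' a, hπmk a⟩
  set Φ := MonoidAlgebra.mapRangeRingHom' G π with hΦdef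
  set φ2 := MonoidAlgebra.mapRangeRingHom' G K.ringCon.mk' with hφ2def
  have hΦsurj : Function.Surjective Φ := mapRangeRingHom'_surjective π hπsurj
  have hφ2surj : Function.Surjective φ2 := mapRangeRingHom'_surjective _ hmk2surj
  -- kernel of π squares to zero
  have hker2 : ∀ c c' : K.ringCon.Quotient, π c = 0 → π c' = 0 → c * c' = 0 := by
    intro c c' hc hc'
    obtain ⟨a, rfl⟩ := hmk2surj c
    obtain ⟨a', rfl⟩ := hmk2surj c'
    rw [hπmk] at hc hc'
    have ha : a ∈ J := (twoSided_mk'_eq_zero J a).mp hc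
    have ha' : a' ∈ J := (twoSided_mk'_eq_zero J a').mp hc'
    rw [← map_mul]
    refine (twoSided_mk'_eq_zero K _).mpr ?_
    rw [hKdef, jacobsonSq]
    exact TwoSidedIdeal.subset_span ⟨a, ha, a', ha', rfl⟩
  have hcoeff : ∀ y : MonoidAlgebra K.ringCon.Quotient G, Φ y = 0 → ∀ g : G, π (y.coeff g) = 0 := by
    intro y hy g
    have h : (MonoidAlgebra.mapRangeRingHom' G π y).coeff g = (0 : MonoidAlgebra J.ringCon.Quotient G).coeff g := by
      rw [← hΦdef, hy]
    rw [mapRangeRingHom'_apply] at h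
    simpa using h
  have hkerΦ : ∀ y y' : MonoidAlgebra K.ringCon.Quotient G,
      Φ y = 0 → Φ y' = 0 → y * y' = 0 := by
    intro y y' hy hy'
    ext g
    rw [MonoidAlgebra.mul_apply, MonoidAlgebra.coeff_zero, Finsupp.zero_apply]
    refine Finset.sum_eq_zero fun a _ => Finset.sum_eq_zero fun b _ => ?_
    dsimp only
    split_ifs
    · exact hker2 (y.coeff a) (y'.coeff b) (hcoeff y hy a) (hcoeff y' hy' b)
    · rfl
  -- all idempotents of the middle group ring are central
  have hcoeff2 : ∀ x : MonoidAlgebra R G, φ2 x = 0 → ∀ g : G, x.coeff g ∈ K := by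
    intro x hx g
    have h : (MonoidAlgebra.mapRangeRingHom' G K.ringCon.mk' x).coeff g
        = (0 : MonoidAlgebra K.ringCon.Quotient G).coeff g := by
      rw [← hφ2def, hx]
    rw [mapRangeRingHom'_apply, MonoidAlgebra.coeff_zero, Finsupp.zero_apply] at h
    exact (twoSided_mk'_eq_zero K _).mp h
  have hkerφ2nil : ∀ x ∈ RingHom.ker φ2, IsNilpotent x := by
    intro x hx
    rw [RingHom.mem_ker] at hx
    refine ⟨n + 1, pow_eq_zero_of_coeffs t n htn hcomm x ?_⟩
    intro g
    exact hMt _ (hJM _ (hKJ _ (hcoeff2 x hx g)))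
  have habQ2 : ∀ e : MonoidAlgebra K.ringCon.Quotient G,
      IsIdempotentElem e → e ∈ Set.center (MonoidAlgebra K.ringCon.Quotient G) := by
    intro e he
    obtain ⟨e', he', hee'⟩ :=
      exists_isIdempotentElem_eq_of_ker_isNilpotent φ2 hkerφ2nil e (hφ2surj e) he
    have hc := habelian e' he'
    rw [Semigroup.mem_center_iff] at hc ⊢
    intro b
    obtain ⟨b', rfl⟩ := hφ2surj b
    rw [← hee', ← map_mul, ← map_mul, hc b']
  -- lift u
  have hkerΦnil : ∀ y ∈ RingHom.ker Φ, IsNilpotent y := by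
    intro y hy
    rw [RingHom.mem_ker] at hy
    exact ⟨2, by rw [sq]; exact hkerΦ y y hy hy⟩
  obtain ⟨hu1, hu2, hu3, hu4⟩ := hu
  obtain ⟨v, hv, hΦv⟩ :=
    exists_isIdempotentElem_eq_of_ker_isNilpotent Φ hkerΦnil u (hΦsurj u) hu1
  refine ⟨v, ⟨hv, habQ2 v hv, ?_, ?_⟩, hΦv⟩
  · intro h0
    exact hu3 (by rw [← hΦv, h0, map_zero])
  · intro e₁ e₂ he₁ he₂ hc₁ hc₂ hne₁ hne₂ ho₁ ho₂ heq
    have hΦcentral : ∀ e : MonoidAlgebra K.ringCon.Quotient G,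
        e ∈ Set.center (MonoidAlgebra K.ringCon.Quotient G) →
        Φ e ∈ Set.center (MonoidAlgebra J.ringCon.Quotient G) := by
      intro e hce
      rw [Semigroup.mem_center_iff] at hce ⊢
      intro b
      obtain ⟨b', rfl⟩ := hΦsurj b
      rw [← map_mul, ← map_mul, hce b']
    have hΦne : ∀ e : MonoidAlgebra K.ringCon.Quotient G,
        IsIdempotentElem e → e ≠ 0 → Φ e ≠ 0 := by
      intro e hidem hne h0
      exact hne (by rw [← hidem]; exact hkerΦ e e h0 h0)
    refine hu4 (Φ e₁) (Φ e₂) ?_ ?_ (hΦcentral e₁ hc₁) (hΦcentral e₂ hc₂)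
      (hΦne e₁ he₁ hne₁) (hΦne e₂ he₂ hne₂) ?_ ?_ ?_
    · show Φ e₁ * Φ e₁ = Φ e₁
      rw [← map_mul, he₁]
    · show Φ e₂ * Φ e₂ = Φ e₂
      rw [← map_mul, he₂]
    · rw [← map_mul, ho₁, map_zero]
    · rw [← map_mul, ho₂, map_zero]
    · rw [← hΦv, heq, map_add]
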